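/- Let I be a type with a map T : I → Prop, inducing for each type X the partial map classifier L(X) := Σ (i : I), (T i → X). Let f : X → Y be any map of types, and let A be a type. Suppose that precomposition I^f : (Y → I) → (X → I) by f is a bijection, and that for every α : Y → I the map A^{f.α} is a bijection, where f.α is the pullback of f along the open embedding {y : Y // T (α y)} → Y determined by α. Then precomposition L(A)^f : (Y → L(A)) → (X → L(A)) is a bijection. -/
import Mathlib

private lemma sig_eq_apply {I A : Type*} {T : I → Prop} {s t : Σ i : I, (T i → A)}
    (h : s = t) (p : T s.1) :
    s.2 p = t.2 ((congrArg Sigma.fst h) ▸ p) := by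
  subst h; rfl

private lemma sig_ext {I A : Type*} {T : I → Prop} {s t : Σ i : I, (T i → A)}
    (e : s.1 = t.1) (h : ∀ p : T s.1, s.2 p = t.2 (e ▸ p)) : s = t := by
  obtain ⟨i, u⟩ := s
  obtain ⟨j, v⟩ := t
  dsimp at e
  subst e
  have : u = v := funext fun p => h p
  rw [this]

/-- Fiore's lemma: if `I` is local for `f` and `A` is local for
every pullback of `f` along an open embedding, then the partial map classifier
`L(A) = Σ (i : I), (T i → A)` is local for `f`. -/
theorem stmt_15 (I : Type*) (T : I → Prop) (A X Y : Type*) (f : X → Y)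
    (hI : Function.Bijective (fun α : Y → I => α ∘ f))
    (hA : ∀ α : Y → I, Function.Bijective
      (fun g : {y : Y // T (α y)} → A =>
        fun x : {x : X // T (α (f x))} => g ⟨f x.1, x.2⟩)) :
    Function.Bijective (fun h : Y → Σ i : I, (T i → A) => h ∘ f) := by
  classical
  constructor
  · -- injectivity
    intro h1 h2 hf
    have hf' : ∀ x, h1 (f x) = h2 (f x) := fun x => congrFun hf x
    have hα : (fun y => (h2 y).1) = (fun y => (h1 y).1) := by
      apply hI.injective
      funext x
      exact (congrArg Sigma.fst (hf' x)).symm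
    set α : Y → I := fun y => (h1 y).1 with hαdef
    let g1 : {y : Y // T (α y)} → A := fun z => (h1 z.1).2 z.2
    let g2 : {y : Y // T (α y)} → A :=
      fun z => (h2 z.1).2 (cast (congrArg T (congrFun hα z.1).symm) z.2)
    have hg : g1 = g2 := by
      apply (hA α).injective
      funext x
      show (h1 (f x.1)).2 x.2 = (h2 (f x.1)).2 _
      exact sig_eq_apply (hf' x.1) x.2
    funext y
    have e : (h1 y).1 = (h2 y).1 := (congrFun hα y).symm
    refine sig_ext e fun p => ?_
    exact congrFun hg ⟨y, p⟩
  · -- surjectivity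
    intro h
    obtain ⟨α, hc⟩ := hI.surjective (fun x => (h x).1)
    have hc' : ∀ x, α (f x) = (h x).1 := fun x => congrFun hc x
    obtain ⟨g, hg⟩ := (hA α).surjective
      (fun x : {x : X // T (α (f x))} =>
        (h x.1).2 (cast (congrArg T (hc' x.1)) x.2))
    refine ⟨fun y => ⟨α y, fun t => g ⟨y, t⟩⟩, ?_⟩
    funext x
    refine sig_ext (hc' x) fun p => ?_
    exact congrFun hg ⟨x, p⟩
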